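/- Let A be a commutative ring, N ≥ 1, and g, h invertible N×N matrices with entries in the Laurent series ring A((t)). Let L = A[[t]]^N ⊆ A((t))^N be the standard lattice. Then there exists an integer a such that t^a·L ⊆ g·L and t^a·L ⊆ h·L, and the quotient A-modules (g·L)/(t^a·L) and (h·L)/(t^a·L) are both finitely generated and projective over A. -/

import Mathlib

noncomputable section

variable (A : Type*) [CommRing A] (N : ℕ)

/-- The subring `A[[t]] ⊆ A((t))` of power series, as an `A`-submodule of the
Laurent series ring: the series whose coefficients in negative degrees vanish. -/
def powerSeriesPart' : Submodule A (LaurentSeries A) where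
  carrier := {x | ∀ i : ℤ, i < 0 → x.coeff i = 0}
  add_mem' := by
    intro x y hx hy i hi
    simp [HahnSeries.coeff_add, hx i hi, hy i hi]
  zero_mem' := by intro i hi; simp
  smul_mem' := by
    intro c x hx i hi
    simp [HahnSeries.coeff_smul, hx i hi]

/-- The standard lattice `L = A[[t]]^N ⊆ A((t))^N`, as an `A`-submodule. -/
def stdLattice : Submodule A (Fin N → LaurentSeries A) :=
  Submodule.pi Set.univ fun _ => powerSeriesPart' A

variable {A N}

/-- The lattice `g·L`: the image of the standard lattice `L = A[[t]]^N` under the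
`A((t))`-linear map of `A((t))^N` given by the matrix `g`. -/
def matLattice (g : Matrix (Fin N) (Fin N) (LaurentSeries A)) :
    Submodule A (Fin N → LaurentSeries A) where
  carrier := g.mulVec '' (stdLattice A N)
  add_mem' := by
    rintro _ _ ⟨x, hx, rfl⟩ ⟨y, hy, rfl⟩
    exact ⟨x + y, (stdLattice A N).add_mem hx hy, (Matrix.mulVec_add g x y).symm ▸ rfl⟩
  zero_mem' := ⟨0, (stdLattice A N).zero_mem, Matrix.mulVec_zero g⟩
  smul_mem' := by
    rintro a _ ⟨x, hx, rfl⟩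
    refine ⟨a • x, (stdLattice A N).smul_mem a hx, ?_⟩
    funext i
    show (Matrix.mulVec g fun j => a • x j) i = a • Matrix.mulVec g x i
    simp only [Matrix.mulVec, dotProduct, ← HahnSeries.single_zero_mul_eq_smul,
      Finset.mul_sum]
    exact Finset.sum_congr rfl fun j _ => by ring

/-- The lattice `c·L = { c • x : x ∈ L }` for a scalar `c ∈ A((t))`. -/
def smulLattice (c : LaurentSeries A) :
    Submodule A (Fin N → LaurentSeries A) where
  carrier := (fun x : Fin N → LaurentSeries A => fun i => c * x i) '' (stdLattice A N)
  add_mem' := by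
    rintro _ _ ⟨x, hx, rfl⟩ ⟨y, hy, rfl⟩
    refine ⟨x + y, (stdLattice A N).add_mem hx hy, ?_⟩
    funext i; simp [mul_add]
  zero_mem' := ⟨0, (stdLattice A N).zero_mem, by funext i; simp⟩
  smul_mem' := by
    rintro a _ ⟨x, hx, rfl⟩
    refine ⟨a • x, (stdLattice A N).smul_mem a hx, ?_⟩
    funext i
    show c * (a • x) i = a • (c * x i)
    simp only [Pi.smul_apply, ← HahnSeries.single_zero_mul_eq_smul]
    ring

/-! If the entries of `g` and `g⁻¹` have order `≥ -a`, then `t^a·L ⊆ g·L ⊆ t^{-a}·L`.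
Writing `P₊` for the `A`-linear map discarding the negative powers of `t`, the map
`x ↦ g·P₊(g⁻¹·x)` is an `A`-linear projection of `A((t))^N` onto `g·L`. Reading off the
coefficients of `t^{-a}, …, t^{a-1}` is injective on `g·L/t^a·L`, and putting them back and
projecting onto `g·L` is a left inverse, so `g·L/t^a·L` is a direct summand of `A^{2aN}`. -/

theorem Submodule.finite_projective_map_mkQ_of_retract {R V F : Type*} [Ring R]
    [AddCommGroup V] [Module R V] [AddCommGroup F] [Module R F]
    [Module.Finite R F] [Module.Projective R F] {T M : Submodule R V} (hTM : T ≤ M)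
    (σ : V →ₗ[R] V) (hσ_mem : ∀ x, σ x ∈ M) (hσ_eq : ∀ x ∈ M, σ x = x)
    (α : F →ₗ[R] V) (β : V →ₗ[R] F) (hβ : T ≤ LinearMap.ker β)
    (hαβ : ∀ x ∈ M, x - α (β x) ∈ T) :
    Module.Finite R (M.map T.mkQ) ∧ Module.Projective R (M.map T.mkQ) := by
  let ι : M.map T.mkQ →ₗ[R] F := T.liftQ β hβ ∘ₗ (M.map T.mkQ).subtype
  let s : F →ₗ[R] M.map T.mkQ :=
    (T.mkQ ∘ₗ σ ∘ₗ α).codRestrict _ fun y => Submodule.mem_map_of_mem (hσ_mem _)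
  have hsι : s ∘ₗ ι = LinearMap.id := by
    ext ⟨_, x, hx, rfl⟩
    -- `σ` fixes both `x` and `x - α (β x) ∈ T ≤ M`, hence also `α (β x)`.
    have hσαβ : σ (α (β x)) = α (β x) := by
      have := hσ_eq _ (hTM (hαβ x hx))
      rwa [map_sub, hσ_eq x hx, sub_right_inj] at this
    show T.mkQ (σ (α (β x))) = T.mkQ x
    rw [hσαβ, Submodule.mkQ_apply, Submodule.mkQ_apply, Submodule.Quotient.eq]
    simpa using T.neg_mem (hαβ x hx)
  exact ⟨.of_surjective s fun y => ⟨ι y, LinearMap.congr_fun hsι y⟩,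
    .of_split ι s hsι⟩

open HahnSeries Filter

namespace LaurentSeries

instance : IsScalarTower A (LaurentSeries A) (LaurentSeries A) :=
  ⟨fun r x y => by simp only [smul_eq_mul, ← single_zero_mul_eq_smul, mul_assoc]⟩

variable (A) in
def orderFiltration (c : ℤ) : Submodule A (LaurentSeries A) where
  carrier := {x | (c : WithTop ℤ) ≤ x.orderTop}
  add_mem' {x y} hx hy := by
    simp only [Set.mem_ofPred_eq] at *
    exact (le_min hx hy).trans min_orderTop_le_orderTop_add
  zero_mem' := by simp
  smul_mem' r x hx := by
    simp only [Set.mem_ofPred_eq] at *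
    exact hx.trans (orderTop_le_orderTop_smul r x)

theorem mem_orderFiltration {c : ℤ} {x : LaurentSeries A} :
    x ∈ orderFiltration A c ↔ (c : WithTop ℤ) ≤ x.orderTop :=
  Iff.rfl

theorem mem_orderFiltration_iff_coeff_eq_zero {c : ℤ} {x : LaurentSeries A} :
    x ∈ orderFiltration A c ↔ ∀ i < c, x.coeff i = 0 := by
  simp only [mem_orderFiltration, le_orderTop_iff_forall, WithTop.coe_lt_coe]

theorem mul_mem_orderFiltration {c d : ℤ} {x y : LaurentSeries A}
    (hx : x ∈ orderFiltration A c) (hy : y ∈ orderFiltration A d) :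
    x * y ∈ orderFiltration A (c + d) :=
  mem_orderFiltration.2 <| calc
    ((c + d : ℤ) : WithTop ℤ) = c + d := WithTop.coe_add c d
    _ ≤ x.orderTop + y.orderTop :=
      add_le_add (mem_orderFiltration.1 hx) (mem_orderFiltration.1 hy)
    _ ≤ (x * y).orderTop := orderTop_add_le_mul

theorem single_mem_orderFiltration (c : ℤ) (r : A) :
    single c r ∈ orderFiltration A c :=
  mem_orderFiltration.2 orderTop_single_le

theorem eventually_mem_orderFiltration (x : LaurentSeries A) :
    ∀ᶠ a in atTop, x ∈ orderFiltration A (-a) := by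
  refine eventually_atTop.2 ⟨-x.order, fun a ha => ?_⟩
  obtain rfl | hx := eq_or_ne x 0
  · exact zero_mem _
  · rw [mem_orderFiltration, ← order_eq_orderTop_of_ne_zero hx, WithTop.coe_le_coe]
    omega

variable (A) in
def nonnegPart : LaurentSeries A →ₗ[A] LaurentSeries A :=
  LinearMap.id - truncLTLinearMap A 0

theorem nonnegPart_mem (x : LaurentSeries A) : nonnegPart A x ∈ orderFiltration A 0 :=
  mem_orderFiltration_iff_coeff_eq_zero.2 fun i hi => by simp [nonnegPart, hi]

theorem nonnegPart_eq_self {x : LaurentSeries A} (hx : x ∈ orderFiltration A 0) :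
    nonnegPart A x = x := by
  ext i
  by_cases hi : i < 0 <;> simp [nonnegPart, hi, mem_orderFiltration_iff_coeff_eq_zero.1 hx]

def windowCoeff (s : Finset ℤ) : LaurentSeries A →ₗ[A] (s → A) :=
  LinearMap.pi fun k => coeff.linearMap k

def ofWindowCoeff (s : Finset ℤ) : (s → A) →ₗ[A] LaurentSeries A where
  toFun f := ∑ k : s, single (k : ℤ) (f k)
  map_add' f g := by simp [Finset.sum_add_distrib]
  map_smul' r f := by
    rw [RingHom.id_apply, Finset.smul_sum]
    exact Finset.sum_congr rfl fun k _ => map_smul (single.linearMap (k : ℤ)) r (f k)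

theorem coeff_ofWindowCoeff_windowCoeff (s : Finset ℤ) (x : LaurentSeries A) (i : ℤ) :
    (ofWindowCoeff s (windowCoeff s x)).coeff i = if i ∈ s then x.coeff i else 0 := by
  simp only [ofWindowCoeff, Finset.univ_eq_attach, windowCoeff, LinearMap.coe_mk, AddHom.coe_mk,
    LinearMap.pi_apply, coeff.linearMap_apply, ZeroHom.toFun_eq_coe, AddMonoidHom.toZeroHom_coe,
    coeff.addMonoidHom_apply, coeff_sum, coeff_single]
  -- `convert` absorbs the classical `Decidable (i = k)` instance coming from `coeff_single`.
  convert (Finset.sum_attach s _).trans (Finset.sum_ite_eq s i x.coeff)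

theorem windowCoeff_eq_zero {s : Finset ℤ} {d : ℤ} (hs : ∀ k ∈ s, k < d)
    {x : LaurentSeries A} (hx : x ∈ orderFiltration A d) : windowCoeff s x = 0 :=
  funext fun k => mem_orderFiltration_iff_coeff_eq_zero.1 hx k (hs k k.2)

theorem sub_ofWindowCoeff_windowCoeff_mem {c d : ℤ} {x : LaurentSeries A}
    (hx : x ∈ orderFiltration A c) :
    x - ofWindowCoeff (.Ico c d) (windowCoeff (.Ico c d) x) ∈ orderFiltration A d := by
  refine mem_orderFiltration_iff_coeff_eq_zero.2 fun i hi => ?_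
  rw [coeff_sub, coeff_ofWindowCoeff_windowCoeff]
  simp only [Finset.mem_Ico]
  by_cases hci : c ≤ i
  · simp [hci, hi]
  · simp [hci, mem_orderFiltration_iff_coeff_eq_zero.1 hx i (not_le.1 hci)]

end LaurentSeries

open LaurentSeries

variable (A N) in
def tPowLattice (c : ℤ) : Submodule A (Fin N → LaurentSeries A) :=
  Submodule.pi Set.univ fun _ => orderFiltration A c

theorem mem_tPowLattice {c : ℤ} {x : Fin N → LaurentSeries A} :
    x ∈ tPowLattice A N c ↔ ∀ i, x i ∈ orderFiltration A c := by
  simp [tPowLattice, Submodule.mem_pi]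

theorem stdLattice_eq_tPowLattice_zero : stdLattice A N = tPowLattice A N 0 := by
  ext x
  simp only [stdLattice, tPowLattice, Submodule.mem_pi, mem_orderFiltration_iff_coeff_eq_zero]
  rfl

theorem smulLattice_single_one (a : ℤ) :
    smulLattice (single a (1 : A)) = tPowLattice A N a := by
  ext x
  constructor
  · rintro ⟨y, hy, rfl⟩
    rw [SetLike.mem_coe, stdLattice_eq_tPowLattice_zero, mem_tPowLattice] at hy
    exact mem_tPowLattice.2 fun i => by
      simpa using mul_mem_orderFiltration (single_mem_orderFiltration a 1) (hy i)
  · intro hx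
    refine ⟨fun i => single (-a) 1 * x i, ?_, funext fun i => ?_⟩
    · rw [SetLike.mem_coe, stdLattice_eq_tPowLattice_zero, mem_tPowLattice]
      exact fun i => by
        simpa using
          mul_mem_orderFiltration (single_mem_orderFiltration (-a) 1) (mem_tPowLattice.1 hx i)
    · simp [← mul_assoc, single_mul_single]

theorem mulVec_mem_tPowLattice {G : Matrix (Fin N) (Fin N) (LaurentSeries A)} {c d : ℤ}
    (hG : ∀ i j, G i j ∈ orderFiltration A c) {x : Fin N → LaurentSeries A}
    (hx : x ∈ tPowLattice A N d) : G.mulVec x ∈ tPowLattice A N (c + d) :=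
  mem_tPowLattice.2 fun i =>
    (orderFiltration A (c + d)).sum_mem (t := Finset.univ) fun j _ =>
      mul_mem_orderFiltration (hG i j) (mem_tPowLattice.1 hx j)

section GeneralLinearGroup

variable (g : Matrix.GeneralLinearGroup (Fin N) (LaurentSeries A))

theorem eventually_entries_mem_orderFiltration :
    ∀ᶠ a in atTop, ∀ i j,
      g.val i j ∈ orderFiltration A (-a) ∧ g.inv i j ∈ orderFiltration A (-a) :=
  eventually_all.2 fun _ => eventually_all.2 fun _ =>
    (eventually_mem_orderFiltration _).and (eventually_mem_orderFiltration _)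

def latticeProjection : (Fin N → LaurentSeries A) →ₗ[A] (Fin N → LaurentSeries A) :=
  g.val.mulVecLin.restrictScalars A ∘ₗ (nonnegPart A).compLeft (Fin N) ∘ₗ
    g.inv.mulVecLin.restrictScalars A

theorem latticeProjection_mem (x : Fin N → LaurentSeries A) :
    latticeProjection g x ∈ matLattice g.val := by
  refine ⟨_, ?_, rfl⟩
  rw [SetLike.mem_coe, stdLattice_eq_tPowLattice_zero, mem_tPowLattice]
  exact fun i => nonnegPart_mem _

theorem latticeProjection_eq_self {x : Fin N → LaurentSeries A} (hx : x ∈ matLattice g.val) :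
    latticeProjection g x = x := by
  obtain ⟨y, hy, rfl⟩ := hx
  rw [SetLike.mem_coe, stdLattice_eq_tPowLattice_zero, mem_tPowLattice] at hy
  have : (nonnegPart A).compLeft (Fin N) y = y := funext fun i => nonnegPart_eq_self (hy i)
  simp [latticeProjection, Matrix.mulVec_mulVec, this]

variable {g} {a : ℤ}
  (hg : ∀ i j, g.val i j ∈ orderFiltration A (-a) ∧ g.inv i j ∈ orderFiltration A (-a))
include hg

theorem tPowLattice_le_matLattice : tPowLattice A N a ≤ matLattice g.val := by
  intro x hx
  refine ⟨g.inv.mulVec x, ?_, by simp [Matrix.mulVec_mulVec]⟩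
  rw [SetLike.mem_coe, stdLattice_eq_tPowLattice_zero, ← neg_add_cancel a]
  exact mulVec_mem_tPowLattice (fun i j => (hg i j).2) hx

theorem matLattice_le_tPowLattice : matLattice g.val ≤ tPowLattice A N (-a) := by
  rintro _ ⟨y, hy, rfl⟩
  rw [SetLike.mem_coe, stdLattice_eq_tPowLattice_zero] at hy
  simpa using mulVec_mem_tPowLattice (fun i j => (hg i j).1) hy

theorem finite_projective_matLattice_quotient :
    Module.Finite A ((matLattice g.val).map (tPowLattice A N a).mkQ) ∧
      Module.Projective A ((matLattice g.val).map (tPowLattice A N a).mkQ) := by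
  refine Submodule.finite_projective_map_mkQ_of_retract (tPowLattice_le_matLattice hg)
    (latticeProjection g) (latticeProjection_mem g) (fun _ => latticeProjection_eq_self g)
    ((ofWindowCoeff (.Ico (-a) a)).compLeft (Fin N))
    ((windowCoeff (.Ico (-a) a)).compLeft (Fin N))
    (fun x hx => ?_) (fun x hx => ?_)
  · exact funext fun i => windowCoeff_eq_zero (fun k hk => (Finset.mem_Ico.1 hk).2)
      (mem_tPowLattice.1 hx i)
  · exact mem_tPowLattice.2 fun i => sub_ofWindowCoeff_windowCoeff_mem
      (mem_tPowLattice.1 (matLattice_le_tPowLattice hg hx) i)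

end GeneralLinearGroup

theorem lattice_common_sublattice_general (A : Type*) [CommRing A] (N : ℕ)
    (g h : Matrix.GeneralLinearGroup (Fin N) (LaurentSeries A)) :
    ∃ a : ℤ,
      smulLattice (HahnSeries.single a (1 : A)) ≤
          matLattice (g : Matrix (Fin N) (Fin N) (LaurentSeries A)) ∧
        smulLattice (HahnSeries.single a (1 : A)) ≤
          matLattice (h : Matrix (Fin N) (Fin N) (LaurentSeries A)) ∧
        Module.Finite A
          ↥((matLattice (g : Matrix (Fin N) (Fin N) (LaurentSeries A))).map
            (smulLattice (HahnSeries.single a (1 : A)) (N := N)).mkQ) ∧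
        Module.Projective A
          ↥((matLattice (g : Matrix (Fin N) (Fin N) (LaurentSeries A))).map
            (smulLattice (HahnSeries.single a (1 : A)) (N := N)).mkQ) ∧
        Module.Finite A
          ↥((matLattice (h : Matrix (Fin N) (Fin N) (LaurentSeries A))).map
            (smulLattice (HahnSeries.single a (1 : A)) (N := N)).mkQ) ∧
        Module.Projective A
          ↥((matLattice (h : Matrix (Fin N) (Fin N) (LaurentSeries A))).map
            (smulLattice (HahnSeries.single a (1 : A)) (N := N)).mkQ) := by
  obtain ⟨a, hg, hh⟩ := ((eventually_entries_mem_orderFiltration g).and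
    (eventually_entries_mem_orderFiltration h)).exists
  obtain ⟨hg_fin, hg_proj⟩ := finite_projective_matLattice_quotient hg
  obtain ⟨hh_fin, hh_proj⟩ := finite_projective_matLattice_quotient hh
  refine ⟨a, ?_⟩
  rw [smulLattice_single_one]
  exact ⟨tPowLattice_le_matLattice hg, tPowLattice_le_matLattice hh,
    hg_fin, hg_proj, hh_fin, hh_proj⟩

/-- Lemma 3.3.1 in the affine free case: given `g, h ∈ GL_N(A((t)))` there is an
integer `a` with `t^a·L ⊆ g·L` and `t^a·L ⊆ h·L` such that the quotient `A`-modules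
`(g·L)/(t^a·L)` and `(h·L)/(t^a·L)` — realized as the images of `g·L` resp. `h·L`
in `A((t))^N / (t^a·L)` — are finitely generated and projective over `A`. -/
theorem lattice_common_sublattice (A : Type*) [CommRing A] (N : ℕ) (hN : 1 ≤ N)
    (g h : Matrix.GeneralLinearGroup (Fin N) (LaurentSeries A)) :
    ∃ a : ℤ,
      smulLattice (HahnSeries.single a (1 : A)) ≤
          matLattice (g : Matrix (Fin N) (Fin N) (LaurentSeries A)) ∧
        smulLattice (HahnSeries.single a (1 : A)) ≤
          matLattice (h : Matrix (Fin N) (Fin N) (LaurentSeries A)) ∧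
        Module.Finite A
          ↥((matLattice (g : Matrix (Fin N) (Fin N) (LaurentSeries A))).map
            (smulLattice (HahnSeries.single a (1 : A)) (N := N)).mkQ) ∧
        Module.Projective A
          ↥((matLattice (g : Matrix (Fin N) (Fin N) (LaurentSeries A))).map
            (smulLattice (HahnSeries.single a (1 : A)) (N := N)).mkQ) ∧
        Module.Finite A
          ↥((matLattice (h : Matrix (Fin N) (Fin N) (LaurentSeries A))).map
            (smulLattice (HahnSeries.single a (1 : A)) (N := N)).mkQ) ∧
        Module.Projective A
          ↥((matLattice (h : Matrix (Fin N) (Fin N) (LaurentSeries A))).map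
            (smulLattice (HahnSeries.single a (1 : A)) (N := N)).mkQ) :=
  lattice_common_sublattice_general A N g h

end
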